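/- arXiv:1711.06530 — 4 statements merged into one kernel-verified Lean document; each statement's English description precedes it below -/
import Mathlib

section
/- Let G = (V, E, w) be a connected weighted graph with Laplacian L, and define the effective resistance Reff(u,v) = ⟨e_u - e_v, L†(e_u - e_v)⟩, where L† is the Moore–Penrose pseudoinverse of L. Then Reff satisfies the triangle inequality: Reff(u,v) + Reff(v,x) ≥ Reff(u,x) for all u, v, x ∈ V. -/
open Matrix BigOperators Finset

variable {V : Type*} [Fintype V] [DecidableEq V]

/-- weighted degree -/
noncomputable def deg (w : V → V → ℝ) (v : V) : ℝ := ∑ u, w v u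

/-- volume of a vertex set -/
noncomputable def vol (w : V → V → ℝ) (S : Finset V) : ℝ := ∑ v ∈ S, deg w v

/-- total weight of edges crossing the cut (S, Sᶜ) -/
noncomputable def cutW (w : V → V → ℝ) (S : Finset V) : ℝ := ∑ u ∈ S, ∑ v ∈ Sᶜ, w u v

/-- total edge weight w(E) -/
noncomputable def totalW (w : V → V → ℝ) : ℝ := (∑ u, ∑ v, w u v) / 2

/-- weighted Laplacian L = D - W -/
noncomputable def lap (w : V → V → ℝ) : Matrix V V ℝ :=
  Matrix.of fun u v => if u = v then deg w u else - w u v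

/-- the four Moore–Penrose conditions -/
def IsMoorePenrose (L Ld : Matrix V V ℝ) : Prop :=
  L * Ld * L = L ∧ Ld * L * Ld = Ld ∧ (L * Ld)ᵀ = L * Ld ∧ (Ld * L)ᵀ = Ld * L

/-- effective resistance via the pseudoinverse Ld of the Laplacian -/
noncomputable def reff (Ld : Matrix V V ℝ) (u v : V) : ℝ :=
  (Pi.single u 1 - Pi.single v 1) ⬝ᵥ (Ld *ᵥ (Pi.single u 1 - Pi.single v 1))

/-- valid symmetric nonnegative loopless weights -/
def GoodW (w : V → V → ℝ) : Prop :=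
  (∀ u v, 0 ≤ w u v) ∧ (∀ u v, w u v = w v u) ∧ (∀ v, w v v = 0)

/-- connectivity of the weighted graph -/
def Conn (w : V → V → ℝ) : Prop := (SimpleGraph.fromRel fun u v => 0 < w u v).Connected

/-- Row formula for the Laplacian acting on a vector. -/
lemma lap_mulVec {w : V → V → ℝ} (hw : GoodW w) (x : V → ℝ) (z : V) :
    (lap w *ᵥ x) z = ∑ y, w z y * (x z - x y) := by
  have hzz := hw.2.2 z
  have hdeg : deg w z = ∑ y ∈ univ.erase z, w z y := by
    rw [deg, ← Finset.add_sum_erase univ _ (mem_univ z), hzz, zero_add]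
  calc (lap w *ᵥ x) z = ∑ y, (if z = y then deg w z else - w z y) * x y := rfl
    _ = (deg w z) * x z + ∑ y ∈ univ.erase z, (if z = y then deg w z else -w z y) * x y := by
        rw [← Finset.add_sum_erase univ _ (mem_univ z), if_pos rfl]
    _ = (∑ y ∈ univ.erase z, w z y) * x z + ∑ y ∈ univ.erase z, (- w z y) * x y := by
        rw [hdeg]
        congr 1
        exact Finset.sum_congr rfl fun y hy => by
          rw [if_neg (Ne.symm (Finset.ne_of_mem_erase hy))]
    _ = ∑ y ∈ univ.erase z, (w z y * x z - w z y * x y) := by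
        rw [Finset.sum_mul, ← Finset.sum_add_distrib]
        exact Finset.sum_congr rfl fun y _ => by ring
    _ = ∑ y, w z y * (x z - x y) := by
        rw [← Finset.add_sum_erase univ (fun y => w z y * (x z - x y)) (mem_univ z), hzz]
        simp [mul_sub]

/-- Minimum principle: if `lap w *ᵥ h = e_a - e_b`, then `h` attains its minimum at `b`. -/
lemma min_principle {w : V → V → ℝ} (hw : GoodW w) (hconn : Conn w) (a b : V) (h : V → ℝ)
    (hLh : lap w *ᵥ h = Pi.single a 1 - Pi.single b 1) :
    ∀ z, h b ≤ h z := by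
  have hconn' : (SimpleGraph.fromRel fun u v => 0 < w u v).Connected := hconn
  have hne : Nonempty V := hconn'.nonempty
  obtain ⟨m, -, hm⟩ := Finset.exists_min_image Finset.univ h ⟨Classical.arbitrary V, Finset.mem_univ _⟩
  have hm' : ∀ z, h m ≤ h z := fun z => hm z (Finset.mem_univ z)
  suffices hb : h b = h m by intro z; rw [hb]; exact hm' z
  have key : ∀ (c : V) (p : (SimpleGraph.fromRel fun u v => 0 < w u v).Walk c b),
      h c = h m → h b = h m := by
    intro c p
    induction p with
    | nil => exact fun hc => hc
    | @cons c d b hadj p ih =>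
      intro hc
      by_cases hcb : c = b
      · rw [← hcb]; exact hc
      · have hnonpos : ∀ y ∈ Finset.univ, w c y * (h c - h y) ≤ 0 := by
          intro y _
          apply mul_nonpos_of_nonneg_of_nonpos (hw.1 c y)
          rw [hc]; linarith [hm' y]
        have hsum_ge : (0:ℝ) ≤ ∑ y, w c y * (h c - h y) := by
          rw [← lap_mulVec hw h c, hLh]
          have hb0 : (Pi.single b 1 : V → ℝ) c = 0 := Pi.single_eq_of_ne hcb 1
          simp only [Pi.sub_apply, hb0, sub_zero, Pi.single_apply]
          split <;> norm_num
        have hsum0 : ∑ y, w c y * (h c - h y) = 0 :=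
          le_antisymm (Finset.sum_nonpos hnonpos) hsum_ge
        have hterm := (Finset.sum_eq_zero_iff_of_nonpos hnonpos).mp hsum0 d (Finset.mem_univ d)
        have hwcd : 0 < w c d := by
          rw [SimpleGraph.fromRel_adj] at hadj
          rcases hadj.2 with h1 | h1
          · exact h1
          · rw [hw.2.1]; exact h1
        have hhd : h d = h c := by
          rcases mul_eq_zero.mp hterm with h0 | h0
          · exact absurd h0 (ne_of_gt hwcd)
          · linarith
        exact ih hLh (hhd.trans hc)
  obtain ⟨p⟩ := hconn'.preconnected m b
  exact key m p rfl

/-- Vectors in the kernel of the Laplacian of a connected graph are constant. -/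
lemma ker_const {w : V → V → ℝ} (hw : GoodW w) (hconn : Conn w) (x : V → ℝ)
    (hx : lap w *ᵥ x = 0) : ∀ a b, x a = x b := by
  have h0 : ∀ a : V, lap w *ᵥ x = Pi.single a 1 - Pi.single a 1 := fun a => by
    rw [sub_self, hx]
  intro a b
  exact le_antisymm (min_principle hw hconn a a x (h0 a) b)
    (min_principle hw hconn b b x (h0 b) a)

/-- `L L†` fixes any vector with zero coordinate sum. -/
lemma LLd_fixes {w : V → V → ℝ} {Ld : Matrix V V ℝ} (hw : GoodW w) (hconn : Conn w)
    (hMP : IsMoorePenrose (lap w) Ld) (d : V → ℝ) (hd : ∑ z, d z = 0) :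
    lap w *ᵥ (Ld *ᵥ d) = d := by
  obtain ⟨h1, h2, h3, h4⟩ := hMP
  have hne : Nonempty V :=
    (show (SimpleGraph.fromRel fun u v => 0 < w u v).Connected from hconn).nonempty
  set L := lap w with hLdef
  have hLsymm : Lᵀ = L := by
    ext i j
    simp only [Matrix.transpose_apply, hLdef, lap, Matrix.of_apply]
    by_cases hij : i = j
    · subst hij; simp
    · rw [if_neg (Ne.symm hij), if_neg hij, hw.2.1 j i]
  set P := L * Ld with hP
  have hPL : P * L = L := h1
  have hLP : L * P = L := by
    have := congrArg Matrix.transpose hPL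
    rwa [Matrix.transpose_mul, hLsymm, h3] at this
  have hPP : P * P = P := by
    calc P * P = (L * Ld * L) * Ld := by rw [hP]; noncomm_ring
      _ = P := by rw [h1]
  set r := d - P *ᵥ d with hr
  have hLr : L *ᵥ r = 0 := by
    rw [hr, Matrix.mulVec_sub, Matrix.mulVec_mulVec, hLP, sub_self]
  have hconst : ∀ a b, r a = r b := ker_const hw hconn r hLr
  have hPr : P *ᵥ r = 0 := by
    rw [hr, Matrix.mulVec_sub, Matrix.mulVec_mulVec, hPP, sub_self]
  have hrPd : r ⬝ᵥ (P *ᵥ d) = 0 := by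
    rw [Matrix.dotProduct_mulVec, ← Matrix.mulVec_transpose, h3, hPr, zero_dotProduct]
  have hrd : r ⬝ᵥ d = 0 := by
    obtain ⟨v0⟩ := hne
    calc r ⬝ᵥ d = ∑ z, r v0 * d z :=
          Finset.sum_congr rfl fun z _ => by rw [hconst z v0]
      _ = r v0 * ∑ z, d z := (Finset.mul_sum _ _ _).symm
      _ = 0 := by rw [hd, mul_zero]
  have hrr : r ⬝ᵥ r = 0 := by
    have h5 : r ⬝ᵥ (d - P *ᵥ d) = 0 := by rw [dotProduct_sub, hrd, hrPd, sub_zero]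
    rwa [← hr] at h5
  have hr0 : ∀ z, r z = 0 := by
    intro z
    have hnn : ∀ y ∈ Finset.univ, 0 ≤ r y * r y := fun y _ => mul_self_nonneg _
    have h6 : ∑ y, r y * r y = 0 := hrr
    exact mul_self_eq_zero.mp ((Finset.sum_eq_zero_iff_of_nonneg hnn).mp h6 z (Finset.mem_univ z))
  have hPd : P *ᵥ d = d := by
    funext z
    have h7 := hr0 z
    rw [hr, Pi.sub_apply, sub_eq_zero] at h7
    exact h7.symm
  rw [Matrix.mulVec_mulVec]
  exact hPd

/-- the effective resistance satisfies the triangle inequality. -/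
theorem reff_triangle
    (w : V → V → ℝ) (Ld : Matrix V V ℝ)
    (hw : GoodW w) (hconn : Conn w)
    (hMP : IsMoorePenrose (lap w) Ld)
    (u v x : V) :
    reff Ld u x ≤ reff Ld u v + reff Ld v x := by
  classical
  set duv : V → ℝ := Pi.single u 1 - Pi.single v 1 with hduv
  set dvx : V → ℝ := Pi.single v 1 - Pi.single x 1 with hdvx
  have hsum : ∀ a b : V, ∑ z, (Pi.single a 1 - Pi.single b 1 : V → ℝ) z = 0 := by
    intro a b
    simp [Finset.sum_sub_distrib, Finset.sum_pi_single]
  have hh : lap w *ᵥ (Ld *ᵥ duv) = duv := LLd_fixes hw hconn hMP duv (hsum u v)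
  have hg : lap w *ᵥ (Ld *ᵥ dvx) = dvx := LLd_fixes hw hconn hMP dvx (hsum v x)
  set h : V → ℝ := Ld *ᵥ duv with hhdef
  set g : V → ℝ := Ld *ᵥ dvx with hgdef
  have hmin : ∀ z, h v ≤ h z := min_principle hw hconn u v h (by rw [hh])
  have hgmax : ∀ z, g z ≤ g v := by
    have hneg : lap w *ᵥ (-g) = Pi.single x 1 - Pi.single v 1 := by
      rw [Matrix.mulVec_neg, hg, hdvx, neg_sub]
    intro z
    have := min_principle hw hconn x v (-g) hneg z
    simpa using this
  have hcross1 : duv ⬝ᵥ g = g u - g v := by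
    simp [hduv, sub_dotProduct, single_dotProduct]
  have hcross2 : dvx ⬝ᵥ h = h v - h x := by
    simp [hdvx, sub_dotProduct, single_dotProduct]
  have hsplit : (Pi.single u 1 - Pi.single x 1 : V → ℝ) = duv + dvx := by
    rw [hduv, hdvx]; ring
  have expand : reff Ld u x = reff Ld u v + reff Ld v x + (duv ⬝ᵥ g + dvx ⬝ᵥ h) := by
    rw [reff, reff, reff, hsplit, Matrix.mulVec_add, add_dotProduct,
      dotProduct_add, dotProduct_add, ← hhdef, ← hgdef, ← hduv, ← hdvx]
    ring
  have e1 : g u - g v ≤ 0 := sub_nonpos.mpr (hgmax u)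
  have e2 : h v - h x ≤ 0 := sub_nonpos.mpr (hmin x)
  rw [expand, hcross1, hcross2]
  linarith
end

section
/- Let G = (V,E,w) be a connected weighted graph with positive weights, s ≠ t, and let p be the s-t unit electric potential vector with threshold sets S_τ = {v : p(v) ≥ τ}. Suppose vol(S_τ) ≤ vol(G)/2 and w(∂S_τ) ≥ c·vol(S_τ)^{1/2+ε} for some c > 0 and 0 < ε ≤ 1/2. Then vol(S_{τ - 2/w(∂S_τ)}) ≥ vol(S_τ) + w(∂S_τ)/2. -/
open Matrix BigOperators Finset

variable {V : Type*} [Fintype V] [DecidableEq V]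

/-- if the threshold set `S_τ` of the s-t electric potential has
`vol(S_τ) ≤ vol(G)/2` and `w(∂S_τ) ≥ c·vol(S_τ)^{1/2+ε}`, then lowering the threshold
by `2/w(∂S_τ)` increases the volume by at least `w(∂S_τ)/2`. -/
theorem threshold_volume_growth
    (w : V → V → ℝ) (p : V → ℝ) (s t : V) (τ c ε : ℝ)
    (hw : GoodW w) (hconn : Conn w) (hst : s ≠ t)
    (hcons : ∀ v : V, v ≠ s → v ≠ t → (∑ u, w v u * (p v - p u)) = 0)
    (hs : (∑ u, w s u * (p s - p u)) = 1)
    (ht : (∑ u, w t u * (p t - p u)) = -1)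
    (hτ1 : p t < τ) (hτ2 : τ ≤ p s)
    (hc : 0 < c) (hε : 0 < ε) (hε' : ε ≤ 1 / 2)
    (hvol : vol w (Finset.univ.filter (fun v => τ ≤ p v)) ≤ vol w Finset.univ / 2)
    (hexp : c * vol w (Finset.univ.filter (fun v => τ ≤ p v)) ^ ((1 : ℝ) / 2 + ε) ≤
        cutW w (Finset.univ.filter (fun v => τ ≤ p v))) :
    vol w (Finset.univ.filter
        (fun v => τ - 2 / cutW w (Finset.univ.filter (fun v => τ ≤ p v)) ≤ p v)) ≥
      vol w (Finset.univ.filter (fun v => τ ≤ p v)) +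
        cutW w (Finset.univ.filter (fun v => τ ≤ p v)) / 2 := by
  classical
  obtain ⟨hw0, hwsym, hwloop⟩ := hw
  set S : Finset V := Finset.univ.filter (fun v => τ ≤ p v) with hSdef
  set W : ℝ := cutW w S with hWdef
  have hsS : s ∈ S := by simp [hSdef, hτ2]
  have htS : t ∉ S := by simp [hSdef, not_le.2 hτ1]
  -- sum of node equations over S
  have h1 : ∑ v ∈ S, ∑ u, w v u * (p v - p u) = 1 := by
    rw [Finset.sum_eq_single s]
    · exact hs
    · intro v hv hvs
      exact hcons v hvs (fun h => htS (h ▸ hv))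
    · intro h; exact absurd hsS h
  -- the internal part vanishes by antisymmetry
  have hint : ∑ v ∈ S, ∑ u ∈ S, w v u * (p v - p u) = 0 := by
    have hneg : ∑ v ∈ S, ∑ u ∈ S, w v u * (p v - p u)
        = -∑ v ∈ S, ∑ u ∈ S, w v u * (p v - p u) := by
      nth_rewrite 1 [Finset.sum_comm]
      rw [← Finset.sum_neg_distrib]
      refine Finset.sum_congr rfl (fun v _ => ?_)
      rw [← Finset.sum_neg_distrib]
      refine Finset.sum_congr rfl (fun u _ => ?_)
      rw [hwsym u v]; ring
    linarith
  -- the cross part equals 1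
  have hcross : ∑ v ∈ S, ∑ u ∈ Sᶜ, w v u * (p v - p u) = 1 := by
    have hsplit : ∑ v ∈ S, ∑ u, w v u * (p v - p u)
        = ∑ v ∈ S, (∑ u ∈ S, w v u * (p v - p u) + ∑ u ∈ Sᶜ, w v u * (p v - p u)) := by
      refine Finset.sum_congr rfl (fun v _ => ?_)
      rw [Finset.sum_add_sum_compl]
    rw [hsplit, Finset.sum_add_distrib] at h1
    rw [hint] at h1; linarith
  -- potentials across the cut: p v ≥ τ > p u
  have hdrop : ∀ v ∈ S, ∀ u ∈ Sᶜ, p u < τ ∧ τ ≤ p v := by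
    intro v hv u hu
    simp only [hSdef, Finset.mem_compl, Finset.mem_filter, Finset.mem_univ, true_and] at hv hu
    exact ⟨not_le.mp hu, hv⟩
  -- W > 0
  have hWnn : ∀ v ∈ S, ∀ u ∈ Sᶜ, (0:ℝ) ≤ w v u := fun v _ u _ => hw0 v u
  have hWpos : 0 < W := by
    rcases (Finset.sum_nonneg fun v hv => Finset.sum_nonneg fun u hu => hw0 v u :
        (0:ℝ) ≤ W).lt_or_eq with h | h
    · exact h
    · exfalso
      have hz : ∀ v ∈ S, ∀ u ∈ Sᶜ, w v u = 0 := by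
        intro v hv u hu
        have h2 := (Finset.sum_eq_zero_iff_of_nonneg
          (fun v hv => Finset.sum_nonneg fun u hu => hw0 v u)).mp h.symm v hv
        exact (Finset.sum_eq_zero_iff_of_nonneg (fun u _ => hw0 v u)).mp h2 u hu
      have : ∑ v ∈ S, ∑ u ∈ Sᶜ, w v u * (p v - p u) = 0 :=
        Finset.sum_eq_zero fun v hv => Finset.sum_eq_zero fun u hu => by
          rw [hz v hv u hu]; ring
      rw [this] at hcross; norm_num at hcross
  -- split Sᶜ into B (small drop) and C (big drop)
  set B : Finset V := Sᶜ.filter (fun v => τ - 2 / W ≤ p v) with hBdef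
  set C : Finset V := Sᶜ.filter (fun v => ¬ (τ - 2 / W ≤ p v)) with hCdef
  -- Markov: weight into C is at most W/2
  have hCbound : ∑ v ∈ S, ∑ u ∈ C, w v u ≤ W / 2 := by
    have hstep : (2 / W) * ∑ v ∈ S, ∑ u ∈ C, w v u ≤ 1 := by
      rw [← hcross, Finset.mul_sum]
      refine Finset.sum_le_sum (fun v hv => ?_)
      rw [Finset.mul_sum]
      refine le_trans (Finset.sum_le_sum (fun u hu => ?_))
        (Finset.sum_le_sum_of_subset_of_nonneg (Finset.filter_subset _ _)
          (fun u hu hu' => ?_))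
      · have huC := hu
        rw [hCdef, Finset.mem_filter] at huC
        obtain ⟨huS, hup⟩ := huC
        have h3 := hdrop v hv u huS
        have : 2 / W ≤ p v - p u := by
          push_neg at hup; linarith [h3.1, h3.2, hup]
        calc 2 / W * w v u = w v u * (2 / W) := by ring
          _ ≤ w v u * (p v - p u) := by
            exact mul_le_mul_of_nonneg_left this (hw0 v u)
      · have h3 := hdrop v hv u hu
        have : 0 ≤ p v - p u := by linarith [h3.1, h3.2]
        exact mul_nonneg (hw0 v u) this
    calc ∑ v ∈ S, ∑ u ∈ C, w v u
        = (W / 2) * ((2 / W) * ∑ v ∈ S, ∑ u ∈ C, w v u) := by field_simp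
      _ ≤ (W / 2) * 1 := mul_le_mul_of_nonneg_left hstep (by positivity)
      _ = W / 2 := mul_one _
  -- so weight into B is at least W/2
  have hBC : ∑ v ∈ S, ∑ u ∈ B, w v u + ∑ v ∈ S, ∑ u ∈ C, w v u = W := by
    rw [hWdef, cutW, ← Finset.sum_add_distrib]
    refine Finset.sum_congr rfl (fun v _ => ?_)
    rw [hBdef, hCdef, Finset.sum_filter_add_sum_filter_not]
  have hBbound : W / 2 ≤ ∑ v ∈ S, ∑ u ∈ B, w v u := by linarith
  -- the new threshold set is S ∪ B, a disjoint union
  set S' : Finset V := Finset.univ.filter (fun v => τ - 2 / W ≤ p v) with hS'def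
  have hSB : S' = S ∪ B := by
    ext v
    simp only [hS'def, hSdef, hBdef, Finset.mem_union, Finset.mem_filter,
      Finset.mem_compl, Finset.mem_univ, true_and]
    constructor
    · intro h
      by_cases hv : τ ≤ p v
      · exact Or.inl hv
      · exact Or.inr ⟨by simp [hSdef, hv], h⟩
    · rintro (h | ⟨_, h⟩)
      · have : 0 < 2 / W := by positivity
        linarith
      · exact h
  have hdisj : Disjoint S B :=
    Finset.disjoint_left.mpr fun v hv hvB =>
      (Finset.mem_compl.mp (Finset.filter_subset _ _ hvB)) hv
  -- volume accounting
  have hvolS' : vol w S' = vol w S + ∑ v ∈ B, deg w v := by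
    rw [hSB, vol, Finset.sum_union hdisj]; rfl
  have hdegB : ∑ v ∈ B, deg w v ≥ ∑ v ∈ S, ∑ u ∈ B, w v u := by
    rw [Finset.sum_comm]
    refine Finset.sum_le_sum (fun v hv => ?_)
    calc ∑ u ∈ S, w u v = ∑ u ∈ S, w v u := by
          exact Finset.sum_congr rfl (fun u _ => hwsym u v)
      _ ≤ ∑ u, w v u := Finset.sum_le_sum_of_subset_of_nonneg (Finset.subset_univ _)
          (fun u _ _ => hw0 v u)
      _ = deg w v := rfl
  have : vol w S' ≥ vol w S + W / 2 := by
    rw [hvolS']; linarith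
  exact this
end

section
/- Let G = (V, E, w) be a connected weighted graph with deg(v) ≥ 1/α for all v ∈ V, and let R_diam = max_{u,v} Reff(u,v). Then for any 0 < ε < 1/2 there exists a set U ⊆ V with vol(U) ≤ vol(G)/2 and Φ(U) ≤ C · α^ε / √(R_diam · ε) · vol(U)^{ε - 1/2} for some universal constant C. -/
open Matrix BigOperators Finset

variable {V : Type*} [Fintype V] [DecidableEq V]

/-!
Let `f = L⁺(𝟙_u - 𝟙_v)` be the potential of the unit `u`–`v` flow, so that
`R = Reff(u, v) = f u - f v`. Each level set `{f ≥ t}` with `f v < t ≤ f u` carries the whole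
unit current, and so does its complement with the orientation reversed. Suppose every `U` with
`vol U ≤ vol G / 2` had `cut U ≥ τ · vol(U) ^ (ε + 1/2)`. Cauchy–Schwarz against the flow shows
that the smaller sides of the level sets of volume about `x` cover a potential range of at most
`4 / (τ² x^(2ε))`. Summing over the dyadic scales `x = 2^k / α` gives `R ≤ 4 α^(2ε) / (τ² ε)`,
which is false for `τ = 3 α^ε / √(R ε)`.
-/

section Laplacian

variable {w : V → V → ℝ}

theorem lap_mulVec_apply (hww : ∀ a, w a a = 0) (x : V → ℝ) (a : V) :
    (lap w *ᵥ x) a = ∑ b, w a b * (x a - x b) := by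
  have hrow : ∀ b, lap w a b * x b = (if a = b then deg w a * x a else 0) - w a b * x b := by
    intro b
    by_cases hab : a = b
    · subst hab; simp [lap, hww]
    · simp [lap, hab]
  simp only [mulVec, dotProduct, hrow, sum_sub_distrib, sum_ite_eq, mem_univ, if_true, deg,
    sum_mul, mul_sub]

theorem lap_transpose (hsym : ∀ a b, w a b = w b a) : (lap w)ᵀ = lap w := by
  ext a b
  by_cases hab : a = b
  · subst hab; rfl
  · simp [lap, hab, Ne.symm hab, hsym a b]

theorem dotProduct_lap_mulVec_self (hsym : ∀ a b, w a b = w b a) (hww : ∀ a, w a a = 0)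
    (x : V → ℝ) : x ⬝ᵥ (lap w *ᵥ x) = (∑ a, ∑ b, w a b * (x a - x b) ^ 2) / 2 := by
  have hswap : ∑ a, ∑ b, w a b * (x b * (x a - x b))
      = -∑ a, ∑ b, w a b * (x a * (x a - x b)) := by
    rw [sum_comm, ← sum_neg_distrib]
    refine sum_congr rfl fun b _ => ?_
    rw [← sum_neg_distrib]
    refine sum_congr rfl fun a _ => ?_
    rw [hsym]; ring
  have hsq : ∑ a, ∑ b, w a b * (x a - x b) ^ 2
      = ∑ a, ∑ b, w a b * (x a * (x a - x b)) - ∑ a, ∑ b, w a b * (x b * (x a - x b)) := by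
    simp only [← sum_sub_distrib]; congr! 2; ring
  have hlin : x ⬝ᵥ (lap w *ᵥ x) = ∑ a, ∑ b, w a b * (x a * (x a - x b)) := by
    simp only [dotProduct, lap_mulVec_apply hww, mul_sum]; congr! 2; ring
  rw [hsq, hswap, hlin]; ring

theorem eq_of_dotProduct_lap_mulVec_self_eq_zero (hw : GoodW w) (hconn : Conn w) {x : V → ℝ}
    (hx : x ⬝ᵥ (lap w *ᵥ x) = 0) (a b : V) : x a = x b := by
  obtain ⟨hw0, hsym, hww⟩ := hw
  have hnonneg : ∀ a b, 0 ≤ w a b * (x a - x b) ^ 2 := fun a b =>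
    mul_nonneg (hw0 a b) (sq_nonneg _)
  have hterm : ∀ a b, w a b * (x a - x b) ^ 2 = 0 := by
    rw [dotProduct_lap_mulVec_self hsym hww, div_eq_zero_iff, or_iff_left two_ne_zero,
      sum_eq_zero_iff_of_nonneg fun a _ => sum_nonneg fun b _ => hnonneg a b] at hx
    exact fun a b => (sum_eq_zero_iff_of_nonneg fun b _ => hnonneg a b).1 (hx a (mem_univ a)) b
      (mem_univ b)
  have hadj : ∀ a b, 0 < w a b → x a = x b := fun a b hab => by
    simpa [hab.ne', sub_eq_zero] using hterm a b
  induction (hconn.preconnected a b).some with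
  | nil => rfl
  | cons h _ ih =>
    rw [SimpleGraph.fromRel_adj] at h
    rcases h.2 with h | h
    · exact (hadj _ _ h).trans ih
    · exact (hadj _ _ h).symm.trans ih

theorem lap_mulVec_mulVec_of_isMoorePenrose (hw : GoodW w) (hconn : Conn w) {Ld : Matrix V V ℝ}
    (hmp : IsMoorePenrose (lap w) Ld) {y : V → ℝ} (hy : ∑ a, y a = 0) :
    lap w *ᵥ (Ld *ᵥ y) = y := by
  obtain ⟨hLLdL, -, hLLd, -⟩ := hmp
  -- `Q` is the orthogonal projection onto `ker L`, i.e. onto the constants, and `y ⊥ 1`.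
  set Q := 1 - lap w * Ld
  have hQt : Qᵀ = Q := by rw [transpose_sub, transpose_one, hLLd]
  have hQQ : Q * Q = Q := by
    simp only [Q, sub_mul, mul_sub, one_mul, mul_one, ← mul_assoc, hLLdL]; abel
  have hLQ : lap w * Q = 0 := by
    rw [← lap_transpose hw.2.1, ← hQt, ← transpose_mul]
    simp [Q, sub_mul, hLLdL]
  set r := Q *ᵥ y
  have hr_const : ∀ a b, r a = r b := eq_of_dotProduct_lap_mulVec_self_eq_zero hw hconn
    (by rw [mulVec_mulVec, hLQ, zero_mulVec, dotProduct_zero])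
  have hyr : y ⬝ᵥ r = 0 := by
    rcases isEmpty_or_nonempty V with _ | ⟨⟨a⟩⟩
    · simp [dotProduct]
    · simp [dotProduct, hr_const _ a, ← sum_mul, hy]
  have hrr : r ⬝ᵥ r = 0 :=
    calc r ⬝ᵥ r = y ⬝ᵥ (Qᵀ *ᵥ r) := by
          rw [mulVec_transpose, dotProduct_comm y, ← dotProduct_mulVec]
      _ = 0 := by rw [hQt, mulVec_mulVec, hQQ, hyr]
  have hr : y - (lap w * Ld) *ᵥ y = 0 := by
    rw [← dotProduct_self_eq_zero.1 hrr]; simp [r, Q, sub_mulVec]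
  rw [mulVec_mulVec, ← sub_eq_zero.1 hr]

theorem dotProduct_lap_mulVec_self_nonneg (hw : GoodW w) (x : V → ℝ) :
    0 ≤ x ⬝ᵥ (lap w *ᵥ x) := by
  rw [dotProduct_lap_mulVec_self hw.2.1 hw.2.2]
  exact div_nonneg (sum_nonneg fun a _ => sum_nonneg fun b _ =>
    mul_nonneg (hw.1 a b) (sq_nonneg _)) zero_le_two

theorem reff_pos (hw : GoodW w) (hconn : Conn w) {Ld : Matrix V V ℝ}
    (hmp : IsMoorePenrose (lap w) Ld) {p q : V} (hpq : p ≠ q) : 0 < reff Ld p q := by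
  set f := Ld *ᵥ (Pi.single p 1 - Pi.single q 1)
  have hf : lap w *ᵥ f = Pi.single p 1 - Pi.single q 1 :=
    lap_mulVec_mulVec_of_isMoorePenrose hw hconn hmp (by simp [sum_sub_distrib])
  have hreff : reff Ld p q = f ⬝ᵥ (lap w *ᵥ f) := by rw [reff, hf, dotProduct_comm]
  refine hreff ▸ (dotProduct_lap_mulVec_self_nonneg hw f).lt_of_ne fun h0 => ?_
  have hconst := eq_of_dotProduct_lap_mulVec_self_eq_zero hw hconn h0.symm
  have hLf : lap w *ᵥ f = 0 := funext fun a => by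
    rw [lap_mulVec_apply hw.2.2]
    exact sum_eq_zero fun b _ => by rw [hconst a b, sub_self, mul_zero]
  simpa [hpq] using congrFun (hf.symm.trans hLf) p

theorem sum_crossing_eq_sum_lap_mulVec (hsym : ∀ a b, w a b = w b a) (hww : ∀ a, w a a = 0)
    (f : V → ℝ) (S : Finset V) :
    ∑ a ∈ S, ∑ b ∈ Sᶜ, w a b * (f a - f b) = ∑ a ∈ S, (lap w *ᵥ f) a := by
  have hinner : ∑ a ∈ S, ∑ b ∈ S, w a b * (f a - f b) = 0 := by
    have hanti : ∑ a ∈ S, ∑ b ∈ S, w a b * (f a - f b)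
        = ∑ a ∈ S, ∑ b ∈ S, -(w a b * (f a - f b)) := by
      rw [sum_comm]
      exact sum_congr rfl fun a _ => sum_congr rfl fun b _ => by rw [hsym]; ring
    simp only [sum_neg_distrib] at hanti
    linarith
  simp only [lap_mulVec_apply hww, ← sum_add_sum_compl S, sum_add_distrib, hinner, zero_add]

theorem sum_crossing_abs_eq_one (hsym : ∀ a b, w a b = w b a) (hww : ∀ a, w a a = 0)
    {f : V → ℝ} {p q : V} (hf : lap w *ᵥ f = Pi.single p 1 - Pi.single q 1) {U : Finset V}
    (hp : p ∈ U) (hq : q ∉ U) (hmono : ∀ a ∈ U, ∀ b ∉ U, f b ≤ f a) :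
    ∑ a ∈ U, ∑ b ∈ Uᶜ, w a b * |f a - f b| = 1 := by
  calc ∑ a ∈ U, ∑ b ∈ Uᶜ, w a b * |f a - f b| = ∑ a ∈ U, ∑ b ∈ Uᶜ, w a b * (f a - f b) :=
        sum_congr rfl fun a ha => sum_congr rfl fun b hb => by
          rw [abs_of_nonneg (sub_nonneg.2 (hmono a ha b (mem_compl.1 hb)))]
    _ = 1 := by
        rw [sum_crossing_eq_sum_lap_mulVec hsym hww, hf]
        simp [sum_sub_distrib, Pi.single_apply, hp, hq]

end Laplacian

theorem sum_mul_sum_crossing_eq {ι : Type*} (J : Finset ι) (g : ι → ℝ) (U : ι → Finset V)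
    (φ : V → V → ℝ) :
    ∑ j ∈ J, g j * ∑ a ∈ U j, ∑ b ∈ (U j)ᶜ, φ a b
      = ∑ a, ∑ b, φ a b * ∑ j ∈ J with a ∈ U j ∧ b ∉ U j, g j := by
  have hrow : ∀ j, g j * ∑ a ∈ U j, ∑ b ∈ (U j)ᶜ, φ a b
      = ∑ a, ∑ b, if a ∈ U j ∧ b ∉ U j then φ a b * g j else 0 := by
    intro j
    simp [mul_sum, ite_and, mul_comm, ← mem_compl]
  simp only [hrow, mul_sum, sum_filter]
  rw [sum_comm]
  refine sum_congr rfl fun a _ => ?_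
  rw [sum_comm]
  simp only [mul_ite, mul_zero]

theorem sq_mul_sum_le_vol_biUnion {ι : Type*} {w : V → V → ℝ} (hw0 : ∀ a b, 0 ≤ w a b)
    {J : Finset ι} {g : ι → ℝ} (hg : ∀ j ∈ J, 0 ≤ g j) {U : ι → Finset V} {Δ : V → V → ℝ}
    (hcur : ∀ j ∈ J, ∑ a ∈ U j, ∑ b ∈ (U j)ᶜ, w a b * Δ a b = 1)
    (hsep : ∀ a b, ∑ j ∈ J with a ∈ U j ∧ b ∉ U j, g j ≤ Δ a b)
    {c : ℝ} (hc : 0 ≤ c) (hcut : ∀ j ∈ J, c ≤ cutW w (U j)) :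
    c ^ 2 * ∑ j ∈ J, g j ≤ vol w (J.biUnion U) := by
  set B := J.biUnion U
  set σ : V → V → ℝ := fun a b => ∑ j ∈ J with a ∈ U j ∧ b ∉ U j, g j
  have hσ0 : ∀ a b, 0 ≤ σ a b := fun a b => sum_nonneg fun j hj => hg j (mem_filter.1 hj).1
  have hσB : ∀ a b, a ∉ B → σ a b = 0 := fun a b ha => sum_eq_zero fun j hj =>
    absurd (mem_biUnion.2 ⟨j, (mem_filter.1 hj).1, (mem_filter.1 hj).2.1⟩) ha
  set D := ∑ j ∈ J, g j
  have hD : D = ∑ a, ∑ b, w a b * Δ a b * σ a b := by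
    rw [← sum_mul_sum_crossing_eq]
    exact sum_congr rfl fun j hj => by rw [hcur j hj, mul_one]
  have hcutsum : c * D ≤ ∑ a, ∑ b, w a b * σ a b := by
    rw [← sum_mul_sum_crossing_eq, mul_sum]
    exact sum_le_sum fun j hj => by
      rw [mul_comm]; exact mul_le_mul_of_nonneg_left (hcut j hj) (hg j hj)
  have hvolB : ∑ a, ∑ b, (if a ∈ B then w a b else 0) = vol w B := by
    simp [vol, deg]
  -- Cauchy–Schwarz for `w σ = √(w σ Δ) · √(w σ / Δ)`, where `σ / Δ ≤ 𝟙[a ∈ B]`.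
  have hCS : (∑ a, ∑ b, w a b * σ a b) ^ 2 ≤ D * vol w B := by
    rw [hD, ← hvolB]
    simp only [← Fintype.sum_prod_type']
    refine sum_sq_le_sum_mul_sum_of_sq_le_mul _ (fun p _ => ?_) (fun p _ => ?_) (fun p _ => ?_)
    · exact mul_nonneg (mul_nonneg (hw0 _ _) ((hσ0 _ _).trans (hsep _ _))) (hσ0 _ _)
    · split_ifs <;> first | exact hw0 _ _ | exact le_rfl
    · split_ifs with ha
      · nlinarith [mul_le_mul_of_nonneg_left (hsep p.1 p.2)
          (mul_nonneg (mul_self_nonneg (w p.1 p.2)) (hσ0 p.1 p.2))]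
      · simp [hσB _ _ ha]
  have hD0 : 0 ≤ D := sum_nonneg hg
  have hcD : (c * D) ^ 2 ≤ D * vol w B :=
    (pow_le_pow_left₀ (mul_nonneg hc hD0) hcutsum 2).trans hCS
  rcases hD0.eq_or_lt with hD0 | hDpos
  · rw [← hD0, mul_zero]
    exact sum_nonneg fun a _ => sum_nonneg fun b _ => hw0 a b
  · exact le_of_mul_le_mul_right (by nlinarith) hDpos

theorem vol_biUnion_le_of_chain {ι : Type*} {w : V → V → ℝ} (hdeg : ∀ a, 0 ≤ deg w a)
    {J : Finset ι} {U : ι → Finset V} (hchain : ∀ i ∈ J, ∀ j ∈ J, U i ⊆ U j ∨ U j ⊆ U i)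
    {M : ℝ} (hM : 0 ≤ M) (hvol : ∀ j ∈ J, vol w (U j) ≤ M) : vol w (J.biUnion U) ≤ M := by
  obtain rfl | hJ := J.eq_empty_or_nonempty
  · simpa [vol] using hM
  obtain ⟨j₀, hj₀, hmax⟩ := J.exists_max_image (fun j => #(U j)) hJ
  have hsub : J.biUnion U ⊆ U j₀ := biUnion_subset.2 fun j hj =>
    (hchain j hj j₀ hj₀).elim id fun h => (eq_of_subset_of_card_le h (hmax j hj)).ge
  exact (sum_le_sum_of_subset_of_nonneg hsub fun a _ _ => hdeg a).trans (hvol j₀ hj₀)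

theorem sum_le_of_dyadic_shells {ι : Type*} {J : Finset ι} {g s : ι → ℝ}
    (hs : ∀ j ∈ J, 1 ≤ s j) {A r : ℝ} (hA : 0 ≤ A) (hr0 : 0 ≤ r) (hr1 : r < 1)
    (hshell : ∀ k : ℕ, ∑ j ∈ J with 2 ^ k ≤ s j ∧ s j < 2 ^ (k + 1), g j ≤ A * r ^ k) :
    ∑ j ∈ J, g j ≤ A / (1 - r) := by
  set m := fun j => Nat.log 2 ⌊s j⌋₊
  have hfiber : ∀ k, {j ∈ J | m j = k} = {j ∈ J | 2 ^ k ≤ s j ∧ s j < 2 ^ (k + 1)} :=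
    fun k => filter_congr fun j hj => by
      have hs0 : 0 ≤ s j := zero_le_one.trans (hs j hj)
      rw [Nat.log_eq_iff (Or.inr ⟨one_lt_two, (Nat.floor_pos.2 (hs j hj)).ne'⟩),
        Nat.le_floor_iff hs0, Nat.floor_lt hs0]
      push_cast; rfl
  rw [← sum_fiberwise_of_maps_to (t := range (J.sup m + 1))
    fun j hj => mem_range.2 (Nat.lt_succ_of_le (le_sup hj))]
  calc ∑ k ∈ range (J.sup m + 1), ∑ j ∈ J with m j = k, g j
      ≤ ∑ k ∈ range (J.sup m + 1), A * r ^ k := sum_le_sum fun k _ => hfiber k ▸ hshell k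
    _ = A * ∑ k ∈ Ico 0 (J.sup m + 1), r ^ k := by rw [mul_sum, range_eq_Ico]
    _ ≤ A * (r ^ 0 / (1 - r)) :=
        mul_le_mul_of_nonneg_left (geom_sum_Ico_le_of_lt_one hr0 hr1) hA
    _ = A / (1 - r) := by rw [pow_zero, mul_one_div]

noncomputable def gapBelow (T : Finset ℝ) (t : ℝ) : ℝ :=
  if h : {s ∈ T | s < t}.Nonempty then t - {s ∈ T | s < t}.max' h else 0

theorem gapBelow_nonneg (T : Finset ℝ) (t : ℝ) : 0 ≤ gapBelow T t := by
  unfold gapBelow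
  split_ifs with h
  · exact sub_nonneg.2 (mem_filter.1 ({s ∈ T | s < t}.max'_mem h)).2.le
  · exact le_rfl

theorem sum_gapBelow_eq_sub {T : Finset ℝ} {p q : ℝ} (hp : p ∈ T) (hq : q ∈ T) (hpq : p ≤ q) :
    ∑ t ∈ T with p < t ∧ t ≤ q, gapBelow T t = q - p := by
  induction hn : #{t ∈ T | p < t ∧ t ≤ q} using Nat.strong_induction_on generalizing q with
  | _ n ih =>
    obtain rfl | hlt := hpq.eq_or_lt
    · rw [sub_self]
      exact sum_eq_zero fun t ht => absurd (mem_filter.1 ht).2 fun h => h.1.not_ge h.2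
    have hA : {s ∈ T | s < q}.Nonempty := ⟨p, mem_filter.2 ⟨hp, hlt⟩⟩
    set q' := {s ∈ T | s < q}.max' hA
    obtain ⟨hq'T, hq'q⟩ := mem_filter.1 ({s ∈ T | s < q}.max'_mem hA)
    have hle_q' : ∀ s ∈ T, s < q → s ≤ q' := fun s hs hsq =>
      le_max' _ s (mem_filter.2 ⟨hs, hsq⟩)
    have hsplit : {t ∈ T | p < t ∧ t ≤ q} = insert q {t ∈ T | p < t ∧ t ≤ q'} := by
      ext t
      simp only [mem_filter, mem_insert]
      constructor
      · rintro ⟨htT, hpt, htq⟩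
        obtain rfl | htq := htq.eq_or_lt
        · exact Or.inl rfl
        · exact Or.inr ⟨htT, hpt, hle_q' t htT htq⟩
      · rintro (rfl | ⟨htT, hpt, htq'⟩)
        · exact ⟨hq, hlt, le_rfl⟩
        · exact ⟨htT, hpt, htq'.trans hq'q.le⟩
    have hq_notMem : q ∉ {t ∈ T | p < t ∧ t ≤ q'} := fun h => (mem_filter.1 h).2.2.not_gt hq'q
    have hcard : #{t ∈ T | p < t ∧ t ≤ q'} < n := by
      rw [← hn, hsplit, card_insert_of_notMem hq_notMem]; exact Nat.lt_succ_self _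
    have hgap : gapBelow T q = q - q' := dif_pos hA
    rw [hsplit, sum_insert hq_notMem, ih _ hcard hq'T (hle_q' p hp hlt) rfl, hgap]
    ring

noncomputable def levelSet (f : V → ℝ) (t : ℝ) : Finset V := {a | t ≤ f a}

noncomputable def smallSide (w : V → V → ℝ) (S : Finset V) : Finset V :=
  if vol w S ≤ vol w univ / 2 then S else Sᶜ

section LevelSets

variable {w : V → V → ℝ} {f : V → ℝ}

theorem vol_smallSide_le (S : Finset V) : vol w (smallSide w S) ≤ vol w univ / 2 := by
  unfold smallSide
  split_ifs with h
  · exact h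
  · have := sum_add_sum_compl S (deg w)
    simp only [vol] at h ⊢
    linarith

theorem smallSide_levelSet_nonempty {u v : V} {t : ℝ} (hvt : f v < t) (htu : t ≤ f u) :
    (smallSide w (levelSet f t)).Nonempty := by
  unfold smallSide
  split_ifs
  · exact ⟨u, by simpa [levelSet] using htu⟩
  · exact ⟨v, by simpa [levelSet] using hvt⟩

theorem min_lt_and_le_max_of_mem_smallSide_levelSet {t : ℝ} {a b : V}
    (ha : a ∈ smallSide w (levelSet f t)) (hb : b ∉ smallSide w (levelSet f t)) :
    min (f a) (f b) < t ∧ t ≤ max (f a) (f b) := by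
  unfold smallSide at ha hb
  split_ifs at ha hb <;> simp only [levelSet, mem_compl, mem_filter, mem_univ, true_and,
    not_le, not_lt] at ha hb
  · exact ⟨min_lt_iff.2 (Or.inr hb), le_max_iff.2 (Or.inl ha)⟩
  · exact ⟨min_lt_iff.2 (Or.inl ha), le_max_iff.2 (Or.inr hb)⟩

theorem sum_crossing_smallSide_levelSet (hsym : ∀ a b, w a b = w b a) (hww : ∀ a, w a a = 0)
    {u v : V} (hf : lap w *ᵥ f = Pi.single u 1 - Pi.single v 1) {t : ℝ} (hvt : f v < t)
    (htu : t ≤ f u) :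
    ∑ a ∈ smallSide w (levelSet f t), ∑ b ∈ (smallSide w (levelSet f t))ᶜ,
      w a b * |f a - f b| = 1 := by
  have hu : u ∈ levelSet f t := by simpa [levelSet] using htu
  have hv : v ∉ levelSet f t := by simpa [levelSet] using hvt
  unfold smallSide
  split_ifs
  · refine sum_crossing_abs_eq_one hsym hww hf hu hv fun a ha b hb => ?_
    simp only [levelSet, mem_filter, mem_univ, true_and, not_le] at ha hb
    linarith
  · have hf' : lap w *ᵥ (-f) = Pi.single v 1 - Pi.single u 1 := by rw [mulVec_neg, hf, neg_sub]
    have := sum_crossing_abs_eq_one hsym hww hf' (mem_compl.2 hv) (by simpa using hu)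
      fun a ha b hb => ?_
    · simpa [abs_sub_comm, ← sub_eq_neg_add] using this
    · simp only [levelSet, compl_filter, mem_filter, mem_univ, true_and, not_le, not_lt] at ha hb
      simp only [Pi.neg_apply, neg_le_neg_iff]
      linarith

theorem sum_gapBelow_crossing_le {J : Finset ℝ} (hJ : J ⊆ univ.image f) (a b : V) :
    ∑ t ∈ J with a ∈ smallSide w (levelSet f t) ∧ b ∉ smallSide w (levelSet f t),
      gapBelow (univ.image f) t ≤ |f a - f b| := by
  set T := univ.image f
  have hmem : ∀ c, f c ∈ T := fun c => mem_image_of_mem f (mem_univ c)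
  calc _ ≤ ∑ t ∈ T with min (f a) (f b) < t ∧ t ≤ max (f a) (f b), gapBelow T t := by
        refine sum_le_sum_of_subset_of_nonneg (fun t ht => ?_) fun t _ _ => gapBelow_nonneg T t
        obtain ⟨htJ, hta, htb⟩ := mem_filter.1 ht
        exact mem_filter.2 ⟨hJ htJ, min_lt_and_le_max_of_mem_smallSide_levelSet hta htb⟩
    _ = |f a - f b| := by
        rw [sum_gapBelow_eq_sub (min_rec' (· ∈ T) (hmem a) (hmem b))
          (max_rec' (· ∈ T) (hmem a) (hmem b)) min_le_max, max_sub_min_eq_abs']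

theorem vol_biUnion_smallSide_levelSet_le (hdeg : ∀ a, 0 ≤ deg w a) {J : Finset ℝ} {M : ℝ}
    (hM : 0 ≤ M) (hvol : ∀ t ∈ J, vol w (smallSide w (levelSet f t)) ≤ M) :
    vol w (J.biUnion fun t => smallSide w (levelSet f t)) ≤ 2 * M := by
  have hanti : Antitone (levelSet f) := fun _ _ hst _ ha => by
    simp only [levelSet, mem_filter, mem_univ, true_and] at ha ⊢
    exact hst.trans ha
  set P := fun t => vol w (levelSet f t) ≤ vol w univ / 2
  set U := fun t => smallSide w (levelSet f t)
  set A := {t ∈ J | P t}.biUnion U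
  set B := {t ∈ J | ¬P t}.biUnion U
  have hchainA : ∀ s ∈ {t ∈ J | P t}, ∀ t ∈ {t ∈ J | P t}, U s ⊆ U t ∨ U t ⊆ U s := by
    intro s hs t ht
    have hs' : vol w (levelSet f s) ≤ vol w univ / 2 := (mem_filter.1 hs).2
    have ht' : vol w (levelSet f t) ≤ vol w univ / 2 := (mem_filter.1 ht).2
    simp only [U, smallSide, if_pos hs', if_pos ht']
    exact (le_total t s).imp (fun h => hanti h) fun h => hanti h
  have hchainB : ∀ s ∈ {t ∈ J | ¬P t}, ∀ t ∈ {t ∈ J | ¬P t}, U s ⊆ U t ∨ U t ⊆ U s := by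
    intro s hs t ht
    have hs' : ¬vol w (levelSet f s) ≤ vol w univ / 2 := (mem_filter.1 hs).2
    have ht' : ¬vol w (levelSet f t) ≤ vol w univ / 2 := (mem_filter.1 ht).2
    simp only [U, smallSide, if_neg hs', if_neg ht', compl_subset_compl]
    exact (le_total s t).imp (fun h => hanti h) fun h => hanti h
  have hsplit : J.biUnion U = A ∪ B := by rw [← union_biUnion, filter_union_filter_not_eq]
  have hinter := sum_union_inter (s₁ := A) (s₂ := B) (f := deg w)
  have hinter0 : 0 ≤ vol w (A ∩ B) := sum_nonneg fun a _ => hdeg a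
  have hA := vol_biUnion_le_of_chain hdeg hchainA hM fun t ht => hvol t (mem_filter.1 ht).1
  have hB := vol_biUnion_le_of_chain hdeg hchainB hM fun t ht => hvol t (mem_filter.1 ht).1
  simp only [vol] at hsplit hinter0 hA hB ⊢
  rw [hsplit]
  linarith

end LevelSets

theorem mul_sum_gapBelow_le_of_vol_mem_Icc {w : V → V → ℝ} (hw : GoodW w)
    (hdeg : ∀ a, 0 ≤ deg w a) {ε τ : ℝ} (hε : 0 ≤ ε) (hτ : 0 < τ)
    (hexp : ∀ U : Finset V, U.Nonempty → vol w U ≤ vol w univ / 2 →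
      τ * vol w U ^ (ε + 1 / 2) ≤ cutW w U)
    {f : V → ℝ} {u v : V} (hf : lap w *ᵥ f = Pi.single u 1 - Pi.single v 1) {J : Finset ℝ}
    (hJ : ∀ t ∈ J, t ∈ univ.image f ∧ f v < t ∧ t ≤ f u) {x : ℝ} (hx : 0 < x)
    (hvol : ∀ t ∈ J, vol w (smallSide w (levelSet f t)) ∈ Set.Icc x (2 * x)) :
    τ ^ 2 * x ^ (2 * ε) * ∑ t ∈ J, gapBelow (univ.image f) t ≤ 4 := by
  obtain ⟨hw0, hsym, hww⟩ := hw
  have hcut : ∀ t ∈ J, τ * x ^ (ε + 1 / 2) ≤ cutW w (smallSide w (levelSet f t)) :=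
    fun t ht => (mul_le_mul_of_nonneg_left (Real.rpow_le_rpow hx.le (hvol t ht).1 (by positivity))
      hτ.le).trans (hexp _ (smallSide_levelSet_nonempty (hJ t ht).2.1 (hJ t ht).2.2)
        (vol_smallSide_le _))
  have hCS := sq_mul_sum_le_vol_biUnion hw0 (fun t _ => gapBelow_nonneg _ t)
    (fun t ht => sum_crossing_smallSide_levelSet hsym hww hf (hJ t ht).2.1 (hJ t ht).2.2)
    (fun a b => sum_gapBelow_crossing_le (fun t ht => (hJ t ht).1) a b) (by positivity) hcut
  have hunion := vol_biUnion_smallSide_levelSet_le hdeg (by positivity) fun t ht => (hvol t ht).2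
  have hc2 : (τ * x ^ (ε + 1 / 2)) ^ 2 = τ ^ 2 * x ^ (2 * ε) * x := by
    rw [mul_pow, ← Real.rpow_mul_natCast hx.le, mul_assoc, ← Real.rpow_add_one hx.ne']
    congr 2
    push_cast
    ring
  rw [hc2] at hCS
  nlinarith [hCS.trans hunion]

theorem sub_le_of_forall_rpow_le_cutW {w : V → V → ℝ} (hw : GoodW w) {α ε τ : ℝ} (hα : 0 < α)
    (hdeg : ∀ a, 1 / α ≤ deg w a) (hε : 0 < ε) (hε2 : ε ≤ 1 / 2) (hτ : 0 < τ)
    (hexp : ∀ U : Finset V, U.Nonempty → vol w U ≤ vol w univ / 2 →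
      τ * vol w U ^ (ε + 1 / 2) ≤ cutW w U)
    {f : V → ℝ} {u v : V} (hf : lap w *ᵥ f = Pi.single u 1 - Pi.single v 1) :
    f u - f v ≤ 4 * α ^ (2 * ε) / (τ ^ 2 * ε) := by
  have hdeg0 : ∀ a, 0 ≤ deg w a := fun a => (one_div_pos.2 hα).le.trans (hdeg a)
  rcases lt_or_ge (f u) (f v) with hlt | huv
  · have : 0 ≤ 4 * α ^ (2 * ε) / (τ ^ 2 * ε) := by positivity
    linarith
  set T := univ.image f
  set J := {t ∈ T | f v < t ∧ t ≤ f u}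
  set U := fun t => smallSide w (levelSet f t)
  have hmem : ∀ c, f c ∈ T := fun c => mem_image_of_mem f (mem_univ c)
  have hvolU : ∀ t ∈ J, 1 ≤ α * vol w (U t) := fun t ht => by
    obtain ⟨-, hvt, htu⟩ := mem_filter.1 ht
    obtain ⟨a, ha⟩ := smallSide_levelSet_nonempty (w := w) hvt htu
    calc 1 = α * (1 / α) := by field_simp
      _ ≤ α * vol w (U t) := mul_le_mul_of_nonneg_left
          ((hdeg a).trans (single_le_sum (fun b _ => hdeg0 b) ha)) hα.le
  have hshell : ∀ k : ℕ, ∑ t ∈ J with 2 ^ k ≤ α * vol w (U t) ∧ α * vol w (U t) < 2 ^ (k + 1),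
      gapBelow T t ≤ 4 * α ^ (2 * ε) / τ ^ 2 * ((1 / 2) ^ (2 * ε)) ^ k := by
    intro k
    set x : ℝ := 2 ^ k / α
    have hx : 0 < x := by positivity
    have hbound := mul_sum_gapBelow_le_of_vol_mem_Icc hw hdeg0 hε.le hτ hexp hf
      (J := {t ∈ J | 2 ^ k ≤ α * vol w (U t) ∧ α * vol w (U t) < 2 ^ (k + 1)})
      (fun t ht => mem_filter.1 (mem_filter.1 ht).1) hx fun t ht => by
        obtain ⟨-, hlo, hhi⟩ := mem_filter.1 ht
        refine ⟨(div_le_iff₀' hα).2 hlo, ?_⟩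
        rw [← mul_div_assoc, ← pow_succ', le_div_iff₀' hα]
        exact hhi.le
    have hscale : α ^ (2 * ε) * ((1 / 2) ^ (2 * ε)) ^ k = (x ^ (2 * ε))⁻¹ := by
      rw [Real.rpow_pow_comm (by norm_num), ← Real.mul_rpow hα.le (by positivity),
        ← Real.inv_rpow hx.le, one_div, inv_pow, inv_div, div_eq_mul_inv]
    rw [mul_div_right_comm, mul_assoc, hscale, ← div_eq_mul_inv, div_div,
      le_div_iff₀ (by positivity)]
    linarith
  have hr : (1 / 2 : ℝ) ^ (2 * ε) ≤ 1 - ε := by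
    have := rpow_one_add_le_one_add_mul_self (s := -1 / 2) (by norm_num) (p := 2 * ε)
      (by positivity) (by linarith)
    norm_num at this ⊢
    linarith
  calc f u - f v = ∑ t ∈ J, gapBelow T t := (sum_gapBelow_eq_sub (hmem v) (hmem u) huv).symm
    _ ≤ 4 * α ^ (2 * ε) / τ ^ 2 / (1 - (1 / 2) ^ (2 * ε)) :=
        sum_le_of_dyadic_shells hvolU (by positivity) (by positivity) (by linarith) hshell
    _ ≤ 4 * α ^ (2 * ε) / τ ^ 2 / ε := div_le_div_of_nonneg_left (by positivity) hε (by linarith)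
    _ = 4 * α ^ (2 * ε) / (τ ^ 2 * ε) := div_div _ _ _

/-- large effective resistance diameter yields a sparse cut: there is a
universal constant `C` such that for every connected weighted graph with minimum degree
at least `1/α` and effective resistance diameter `R`, and every `0 < ε < 1/2`, there is
a set `U` with `vol(U) ≤ vol(G)/2` and
`Φ(U) ≤ C · α^ε / √(R·ε) · vol(U)^{ε-1/2}`. -/
theorem sparse_cut_from_reff_diam :
    ∃ C : ℝ, 0 < C ∧
      ∀ (V : Type) [Fintype V] [DecidableEq V]
        (w : V → V → ℝ) (Ld : Matrix V V ℝ) (α ε R : ℝ),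
        GoodW w → Conn w → IsMoorePenrose (lap w) Ld →
        0 < α → (∀ v : V, 1 / α ≤ deg w v) →
        0 < ε → ε < 1 / 2 →
        (∀ u v : V, reff Ld u v ≤ R) → (∃ u v : V, reff Ld u v = R) →
        ∃ U : Finset V, U.Nonempty ∧ vol w U ≤ vol w Finset.univ / 2 ∧
          cutW w U / vol w U ≤
            C * α ^ ε / Real.sqrt (R * ε) * vol w U ^ (ε - 1 / 2) := by
  refine ⟨3, by norm_num, ?_⟩
  intro V _ _ w Ld α ε R hw hconn hmp hα hdeg hε hε2 hRle ⟨u, v, huvR⟩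
  have hdeg_pos : ∀ a, 0 < deg w a := fun a => (one_div_pos.2 hα).trans_le (hdeg a)
  obtain ⟨b, -, hub⟩ := exists_lt_of_sum_lt (s := univ) (f := 0) (g := w u)
    (by simpa [deg] using hdeg_pos u)
  have hRpos : 0 < R := (reff_pos hw hconn hmp fun h => by simp [h, hw.2.2] at hub).trans_le
    (hRle u b)
  set f := Ld *ᵥ (Pi.single u 1 - Pi.single v 1)
  have hf : lap w *ᵥ f = Pi.single u 1 - Pi.single v 1 :=
    lap_mulVec_mulVec_of_isMoorePenrose hw hconn hmp (by simp [sum_sub_distrib])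
  have hR : R = f u - f v := by simp [← huvR, reff, f, sub_dotProduct]
  by_contra! hcon
  set τ := 3 * α ^ ε / Real.sqrt (R * ε)
  have hexp : ∀ U : Finset V, U.Nonempty → vol w U ≤ vol w univ / 2 →
      τ * vol w U ^ (ε + 1 / 2) ≤ cutW w U := fun U hU hhalf => by
    have hvol : 0 < vol w U := sum_pos (fun a _ => hdeg_pos a) hU
    have := (lt_div_iff₀ hvol).1 (hcon U hU hhalf)
    rw [show ε + 1 / 2 = ε - 1 / 2 + 1 by ring, Real.rpow_add_one hvol.ne', ← mul_assoc]
    exact this.le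
  have hτ2 : τ ^ 2 = 9 * α ^ (2 * ε) / (R * ε) := by
    rw [div_pow, mul_pow, Real.sq_sqrt (by positivity), ← Real.rpow_mul_natCast hα.le]
    ring_nf
  have hbound := sub_le_of_forall_rpow_le_cutW hw hα hdeg hε hε2.le (by positivity) hexp hf
  rw [← hR, hτ2, show 4 * α ^ (2 * ε) / (9 * α ^ (2 * ε) / (R * ε) * ε) = 4 / 9 * R by
    field_simp] at hbound
  linarith
end

section
/- For any connected weighted graph G = (V, E, w) with positive edge weights, the second smallest eigenvalue λ₂ of the weighted Laplacian satisfies λ₂ ≥ C · min_e w(e) · (min_e w(e) / w(E))² for a universal constant C > 0. -/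
open Matrix BigOperators Finset

variable {V : Type*} [Fintype V] [DecidableEq V]

set_option linter.unusedSectionVars false

lemma getVert_injOn' {G : SimpleGraph V} {u v : V} (p : G.Walk u v) (hp : p.IsPath) :
    ∀ i ≤ p.length, ∀ j ≤ p.length, p.getVert i = p.getVert j → i = j := by
  induction p with
  | nil => intro i hi j hj _; simp only [SimpleGraph.Walk.length_nil, Nat.le_zero] at hi hj; omega
  | cons h q ih =>
    rw [SimpleGraph.Walk.cons_isPath_iff] at hp
    intro i hi j hj hij
    simp only [SimpleGraph.Walk.length_cons] at hi hj
    match i, j with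
    | 0, 0 => rfl
    | 0, j + 1 =>
      exfalso
      apply hp.2
      rw [SimpleGraph.Walk.mem_support_iff_exists_getVert]
      exact ⟨j, by simpa [SimpleGraph.Walk.getVert_cons_succ] using hij.symm, by omega⟩
    | i + 1, 0 =>
      exfalso
      apply hp.2
      rw [SimpleGraph.Walk.mem_support_iff_exists_getVert]
      exact ⟨i, by simpa [SimpleGraph.Walk.getVert_cons_succ] using hij, by omega⟩
    | i + 1, j + 1 =>
      have := ih hp.1 i (by omega) j (by omega)
        (by simpa [SimpleGraph.Walk.getVert_cons_succ] using hij)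
      omega


lemma lap_quad (w : V → V → ℝ) (hsymm : ∀ u v, w u v = w v u) (hloop : ∀ v, w v v = 0)
    (x : V → ℝ) :
    2 * (x ⬝ᵥ ((lap w) *ᵥ x)) = ∑ a, ∑ b, w a b * (x a - x b) ^ 2 := by
  have hmv : ∀ u, ((lap w) *ᵥ x) u = deg w u * x u - ∑ t, w u t * x t := by
    intro u
    simp only [Matrix.mulVec, dotProduct, lap, Matrix.of_apply]
    have key : ∀ t, (if u = t then deg w u else -w u t) * x t
        = (if u = t then (deg w u + w u t) * x t else 0) - w u t * x t := by
      intro t; by_cases h : u = t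
      · subst h; simp [hloop u]
      · simp [h]
    rw [Finset.sum_congr rfl fun t _ => key t, Finset.sum_sub_distrib, Finset.sum_ite_eq]
    simp [hloop u]
  have hL : x ⬝ᵥ ((lap w) *ᵥ x)
      = ∑ a, deg w a * x a ^ 2 - ∑ a, ∑ b, w a b * (x a * x b) := by
    simp only [dotProduct]
    rw [Finset.sum_congr rfl fun u _ => by rw [hmv u]]
    rw [← Finset.sum_sub_distrib]
    refine Finset.sum_congr rfl fun u _ => ?_
    rw [mul_sub, Finset.mul_sum]
    congr 1
    · ring
    · exact Finset.sum_congr rfl fun t _ => by ring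
  have e1 : ∑ a, ∑ b, w a b * x a ^ 2 = ∑ a, deg w a * x a ^ 2 := by
    refine Finset.sum_congr rfl fun a _ => ?_
    rw [deg, Finset.sum_mul]
  have e2 : ∑ a, ∑ b, w a b * x b ^ 2 = ∑ a, deg w a * x a ^ 2 := by
    rw [Finset.sum_comm]
    refine Finset.sum_congr rfl fun b _ => ?_
    rw [deg, Finset.sum_mul]
    exact Finset.sum_congr rfl fun a _ => by rw [hsymm]
  have key : ∀ a b : V, w a b * (x a - x b) ^ 2
      = w a b * x a ^ 2 + w a b * x b ^ 2 - 2 * (w a b * (x a * x b)) := by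
    intros; ring
  calc 2 * (x ⬝ᵥ ((lap w) *ᵥ x))
      = 2 * ∑ a, deg w a * x a ^ 2 - 2 * ∑ a, ∑ b, w a b * (x a * x b) := by rw [hL]; ring
    _ = ∑ a, ∑ b, w a b * (x a - x b) ^ 2 := by
        simp only [key, Finset.sum_add_distrib, Finset.sum_sub_distrib, ← Finset.mul_sum, e1, e2]
        ring


lemma sum_pairs_sq (x : V → ℝ) (hx : ∑ v, x v = 0) :
    ∑ a, ∑ b, (x a - x b) ^ 2 = 2 * (Fintype.card V : ℝ) * ∑ v, x v ^ 2 := by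
  have key : ∀ a b : V, (x a - x b) ^ 2 = x a ^ 2 + x b ^ 2 - 2 * (x a * x b) := by intros; ring
  simp only [key, Finset.sum_add_distrib, Finset.sum_sub_distrib, ← Finset.mul_sum, hx,
    mul_zero, Finset.sum_const, Finset.card_univ, nsmul_eq_mul, Finset.sum_mul, zero_mul,
    Finset.sum_const_zero, sub_zero]
  ring


lemma pair_bound (w : V → V → ℝ) (wmin : ℝ) (hw0 : ∀ u v, 0 ≤ w u v)
    (hsymm : ∀ u v, w u v = w v u) (hconn : Conn w)
    (hmin : ∀ u v, 0 < w u v → wmin ≤ w u v) (hwmin : 0 ≤ wmin) (x : V → ℝ) (u v : V) :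
    wmin * (x u - x v) ^ 2
      ≤ (Fintype.card V : ℝ) * ∑ a, ∑ b, w a b * (x a - x b) ^ 2 := by
  have hS2 : 0 ≤ ∑ a, ∑ b, w a b * (x a - x b) ^ 2 :=
    Finset.sum_nonneg fun a _ => Finset.sum_nonneg fun b _ =>
      mul_nonneg (hw0 a b) (sq_nonneg _)
  by_cases huv : u = v
  · subst huv
    simp only [sub_self]
    have : (0:ℝ) ≤ (Fintype.card V : ℝ) := by positivity
    nlinarith
  · obtain ⟨p0⟩ := hconn.preconnected u v
    set q := p0.toPath.1 with hqdef
    have hq : q.IsPath := p0.toPath.2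
    set k := q.length with hk
    have hkn : (k : ℝ) ≤ (Fintype.card V : ℝ) := by exact_mod_cast hq.length_lt.le
    set d : ℕ → ℝ := fun i => x (q.getVert (i + 1)) - x (q.getVert i) with hd
    have htel : ∑ i ∈ Finset.range k, d i = x v - x u := by
      rw [hd]
      rw [Finset.sum_range_sub (fun i => x (q.getVert i)) k]
      rw [hk, q.getVert_length, q.getVert_zero]
    have hCS : (x u - x v) ^ 2 ≤ (k : ℝ) * ∑ i ∈ Finset.range k, d i ^ 2 := by
      have := sq_sum_le_card_mul_sum_sq (s := Finset.range k) (f := d)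
      rw [htel, Finset.card_range] at this
      calc (x u - x v) ^ 2 = (x v - x u) ^ 2 := by ring
        _ ≤ (k : ℝ) * ∑ i ∈ Finset.range k, d i ^ 2 := this
    have hstep : ∀ i ∈ Finset.range k,
        wmin * d i ^ 2 ≤ w (q.getVert i) (q.getVert (i + 1)) * d i ^ 2 := by
      intro i hi
      have hadj := q.adj_getVert_succ (Finset.mem_range.mp hi)
      rw [SimpleGraph.fromRel_adj] at hadj
      have hpos : 0 < w (q.getVert i) (q.getVert (i + 1)) := by
        rcases hadj.2 with h | h
        · exact h
        · rw [hsymm]; exact h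
      exact mul_le_mul_of_nonneg_right (hmin _ _ hpos) (sq_nonneg _)
    have himg : ∑ i ∈ Finset.range k, w (q.getVert i) (q.getVert (i + 1)) * d i ^ 2
        ≤ ∑ a, ∑ b, w a b * (x a - x b) ^ 2 := by
      set g : V × V → ℝ := fun pr => w pr.1 pr.2 * (x pr.2 - x pr.1) ^ 2 with hg
      set φ : ℕ → V × V := fun i => (q.getVert i, q.getVert (i + 1)) with hφ
      have hinj : ∀ i ∈ Finset.range k, ∀ j ∈ Finset.range k, φ i = φ j → i = j := by
        intro i hi j hj hij
        have h1 : q.getVert i = q.getVert j := congrArg Prod.fst hij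
        exact getVert_injOn' q hq i (le_of_lt (Finset.mem_range.mp hi)) j
          (le_of_lt (Finset.mem_range.mp hj)) h1
      calc ∑ i ∈ Finset.range k, w (q.getVert i) (q.getVert (i + 1)) * d i ^ 2
          = ∑ i ∈ Finset.range k, g (φ i) := rfl
        _ = ∑ pr ∈ (Finset.range k).image φ, g pr := (Finset.sum_image hinj).symm
        _ ≤ ∑ pr ∈ (Finset.univ : Finset (V × V)), g pr :=
            Finset.sum_le_sum_of_subset_of_nonneg (Finset.subset_univ _)
              (fun pr _ _ => mul_nonneg (hw0 pr.1 pr.2) (sq_nonneg _))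
        _ = ∑ a, ∑ b, w a b * (x b - x a) ^ 2 := by simpa [hg] using Fintype.sum_prod_type (f := g)
        _ = ∑ a, ∑ b, w a b * (x a - x b) ^ 2 := by
            refine Finset.sum_congr rfl fun a _ => Finset.sum_congr rfl fun b _ => ?_
            ring
    calc wmin * (x u - x v) ^ 2
        ≤ wmin * ((k : ℝ) * ∑ i ∈ Finset.range k, d i ^ 2) :=
          mul_le_mul_of_nonneg_left hCS hwmin
      _ = (k : ℝ) * ∑ i ∈ Finset.range k, wmin * d i ^ 2 := by
          rw [← Finset.mul_sum]; ring
      _ ≤ (k : ℝ) * ∑ i ∈ Finset.range k, w (q.getVert i) (q.getVert (i + 1)) * d i ^ 2 :=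
          mul_le_mul_of_nonneg_left (Finset.sum_le_sum hstep) (by positivity)
      _ ≤ (k : ℝ) * ∑ a, ∑ b, w a b * (x a - x b) ^ 2 :=
          mul_le_mul_of_nonneg_left himg (by positivity)
      _ ≤ (Fintype.card V : ℝ) * ∑ a, ∑ b, w a b * (x a - x b) ^ 2 :=
          mul_le_mul_of_nonneg_right hkn hS2




/-- there is a universal constant `C > 0` such that for every connected
weighted graph, `λ₂ ≥ C · min_e w(e) · (min_e w(e)/w(E))²`. -/
theorem lambda2_lower_bound :
    ∃ C : ℝ, 0 < C ∧
      ∀ (V : Type) [Fintype V] [DecidableEq V]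
        (w : V → V → ℝ) (wmin lam2 : ℝ),
        GoodW w → Conn w →
        (∀ u v, 0 < w u v → wmin ≤ w u v) →
        (∃ u v, 0 < w u v ∧ w u v = wmin) →
        lam2 = sInf {r : ℝ | ∃ x : V → ℝ, x ≠ 0 ∧ (∑ v, x v) = 0 ∧
            r = (x ⬝ᵥ ((lap w) *ᵥ x)) / (x ⬝ᵥ x)} →
        C * wmin * (wmin / totalW w) ^ 2 ≤ lam2 := by
  refine ⟨1/4, by norm_num, ?_⟩
  intro V _ _ w wmin lam2 hGood hConn hminle hex hlam
  obtain ⟨hw0, hsymm, hloop⟩ := hGood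
  obtain ⟨u0, v0, hpos0, heq0⟩ := hex
  have hwmin : 0 < wmin := heq0 ▸ hpos0
  have hne0 : u0 ≠ v0 := by
    rintro rfl; rw [hloop] at hpos0; exact lt_irrefl 0 hpos0
  have hcard : 1 < Fintype.card V := Fintype.one_lt_card_iff.mpr ⟨u0, v0, hne0⟩
  set n : ℝ := (Fintype.card V : ℝ) with hn
  have hnpos : (0:ℝ) < n := by
    rw [hn]; exact_mod_cast Nat.lt_of_lt_of_le Nat.zero_lt_one hcard.le
  have hdeg : ∀ u : V, wmin ≤ deg w u := by
    intro u
    obtain ⟨b, hb⟩ := Fintype.exists_ne_of_one_lt_card hcard u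
    obtain ⟨p⟩ := hConn.preconnected u b
    have hnil : ¬ p.Nil := SimpleGraph.Walk.not_nil_of_ne (Ne.symm hb)
    have hadj := p.adj_snd hnil
    rw [SimpleGraph.fromRel_adj] at hadj
    have hpos : 0 < w u (p.getVert 1) := by
      rcases hadj.2 with h | h
      · exact h
      · rw [hsymm]; exact h
    calc wmin ≤ w u (p.getVert 1) := hminle _ _ hpos
      _ ≤ deg w u := Finset.single_le_sum (fun t _ => hw0 u t) (Finset.mem_univ _)
  set W := totalW w with hWdef
  have h2W : n * wmin ≤ 2 * W := by
    have h1 : ∑ _u : V, wmin ≤ ∑ u : V, deg w u := Finset.sum_le_sum fun u _ => hdeg u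
    rw [Finset.sum_const, Finset.card_univ, nsmul_eq_mul] at h1
    have h2 : (∑ u : V, deg w u) = 2 * W := by
      rw [hWdef, totalW]; simp only [deg]; ring
    rw [h2] at h1; rw [hn]; exact h1
  have hWpos : 0 < W := by nlinarith
  subst hlam
  apply le_csInf
  · refine ⟨_, (fun t => (if t = u0 then (1:ℝ) else 0) - (if t = v0 then 1 else 0)), ?_, ?_, rfl⟩
    · intro hzero
      have := congrFun hzero u0
      simp [hne0] at this
    · simp [Finset.sum_sub_distrib, Finset.sum_ite_eq', hne0]
  · rintro r ⟨x, hx0, hxsum, rfl⟩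
    have hxx : 0 < x ⬝ᵥ x := by
      obtain ⟨t, ht⟩ := Function.ne_iff.mp hx0
      simp only [Pi.zero_apply] at ht
      have hxxdef : x ⬝ᵥ x = ∑ v, x v * x v := rfl
      rw [hxxdef]
      exact Finset.sum_pos' (fun v _ => mul_self_nonneg _)
        ⟨t, Finset.mem_univ t, mul_self_pos.mpr ht⟩
    rw [le_div_iff₀ hxx]
    set R := x ⬝ᵥ ((lap w) *ᵥ x) with hRdef
    set Sx := ∑ t, x t ^ 2 with hSxdef
    have hxxSx : x ⬝ᵥ x = Sx := by
      rw [hSxdef]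
      exact Finset.sum_congr rfl fun t _ => (sq (x t)).symm
    have hquad := lap_quad w hsymm hloop x
    rw [← hRdef] at hquad
    have hS2nn : 0 ≤ ∑ a, ∑ b, w a b * (x a - x b) ^ 2 :=
      Finset.sum_nonneg fun a _ => Finset.sum_nonneg fun b _ =>
        mul_nonneg (hw0 a b) (sq_nonneg _)
    have hRnn : 0 ≤ R := by linarith
    have hpairs := sum_pairs_sq x hxsum
    rw [← hn] at hpairs
    have hsum : ∑ a, ∑ b, wmin * (x a - x b) ^ 2
        ≤ ∑ _a : V, ∑ _b : V, n * (∑ c, ∑ e, w c e * (x c - x e) ^ 2) := by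
      refine Finset.sum_le_sum fun a _ => Finset.sum_le_sum fun b _ => ?_
      rw [hn]
      exact pair_bound w wmin hw0 hsymm hConn hminle hwmin.le x a b
    have hLHS : ∑ a, ∑ b, wmin * (x a - x b) ^ 2 = wmin * (2 * n * Sx) := by
      simp only [← Finset.mul_sum]; rw [hpairs, hSxdef]
    have hRHS : ∑ _a : V, ∑ _b : V, n * (∑ c, ∑ e, w c e * (x c - x e) ^ 2)
        = n * n * (n * (2 * R)) := by
      rw [Finset.sum_const, Finset.sum_const, Finset.card_univ, nsmul_eq_mul, nsmul_eq_mul,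
        ← hquad, ← hn]
      ring
    rw [hLHS, hRHS] at hsum
    have h1 : wmin * n * Sx ≤ n ^ 3 * R := by nlinarith [hsum]
    have hSxpos : 0 < Sx := hxxSx ▸ hxx
    have e1 : wmin ^ 2 * (wmin * n * Sx) ≤ wmin ^ 2 * (n ^ 3 * R) :=
      mul_le_mul_of_nonneg_left h1 (sq_nonneg wmin)
    have e2 : (n * wmin) ^ 2 ≤ (2 * W) ^ 2 := by
      have : 0 ≤ n * wmin := by positivity
      nlinarith
    have e3 : (n * wmin) ^ 2 * (n * R) ≤ (2 * W) ^ 2 * (n * R) :=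
      mul_le_mul_of_nonneg_right e2 (by positivity)
    have e4 : wmin ^ 3 * Sx * n ≤ 4 * W ^ 2 * R * n := by nlinarith [e1, e3]
    have key : wmin ^ 3 * Sx ≤ 4 * W ^ 2 * R := le_of_mul_le_mul_right e4 hnpos
    have hWne : W ≠ 0 := ne_of_gt hWpos
    have hgoal : (1:ℝ)/4 * wmin * (wmin / W) ^ 2 * Sx = (wmin ^ 3 * Sx) / (4 * W ^ 2) := by
      simp only [div_pow, div_eq_mul_inv, mul_inv]; ring
    rw [hxxSx, hgoal, div_le_iff₀ (by positivity)]
    linarith [key]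
end
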